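/- closure(C \ Φ(C)) = closure(interior(C \ Φ(C))), and ∂(C \ Φ(C)) = ∂(interior(C \ Φ(C))). -/

import Mathlib

/-!
Since `C` is convex with nonempty interior, `C ⊆ closure (interior C)`. The set `Φ(C)` is closed:
`C` is compact (Carathéodory exhibits it as a continuous image of a simplex times a power of `F`)
and affine maps of a finite-dimensional space are continuous. For an open `U`,
`interior (C ∩ U) = interior C ∩ U`, so `C ∩ U ⊆ closure (interior (C ∩ U))` persists with
`U = Φ(C)ᶜ`, and this inclusion forces both the closures and the frontiers to agree.
-/

open Set

lemma Function.extend_of_forall {α β γ : Type*} {f : α → β} {g : α → γ} {g' : β → γ}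
    {P : γ → Prop} (hg : ∀ a, P (g a)) (hg' : ∀ b, P (g' b)) (b : β) :
    P (Function.extend f g g' b) := by
  classical
  rw [Function.extend_def]
  split_ifs
  exacts [hg _, hg' b]

section CompactConvexHull

variable {E : Type*} [AddCommGroup E] [Module ℝ E] [FiniteDimensional ℝ E]

/-- Carathéodory's theorem; the unused indices get weight `0` at the point `x₀`. -/
lemma exists_stdSimplex_sum_eq_of_mem_convexHull {s : Set E} {x x₀ : E}
    (hx : x ∈ convexHull ℝ s) (hx₀ : x₀ ∈ s) :
    ∃ w ∈ stdSimplex ℝ (Fin (Module.finrank ℝ E + 1)),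
      ∃ z : Fin (Module.finrank ℝ E + 1) → E, (∀ j, z j ∈ s) ∧ ∑ j, w j • z j = x := by
  obtain ⟨ι, _, z, w, hzs, hindep, hwpos, hwsum, hwx⟩ := eq_pos_convex_span_of_mem_convexHull hx
  have hcard : Fintype.card ι ≤ Fintype.card (Fin (Module.finrank ℝ E + 1)) := by
    simpa using hindep.card_le_finrank_succ.trans (Nat.succ_le_succ (Submodule.finrank_le _))
  obtain ⟨e⟩ := Function.Embedding.nonempty_of_card_le hcard
  have hw_out : ∀ j ∉ range e, Function.extend e w 0 j = 0 := fun j hj =>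
    Function.extend_apply' _ _ _ hj
  refine ⟨Function.extend e w 0,
    ⟨Function.extend_of_forall (P := (0 ≤ ·)) (fun i => (hwpos i).le) fun _ => le_rfl, ?_⟩,
    Function.extend e z fun _ => x₀,
    Function.extend_of_forall (P := (· ∈ s)) (fun i => hzs (mem_range_self i)) fun _ => hx₀, ?_⟩
  · rw [← hwsum]
    exact (Fintype.sum_of_injective e e.injective _ _ hw_out
      fun i => (e.injective.extend_apply w 0 i).symm).symm
  · rw [← hwx]
    refine (Fintype.sum_of_injective e e.injective _ _ (fun j hj => ?_) fun i => ?_).symm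
    · simp only [hw_out j hj, zero_smul]
    · simp only [e.injective.extend_apply]

lemma convexHull_eq_image_stdSimplex_prod_pi {s : Set E} {x₀ : E} (hx₀ : x₀ ∈ s) :
    convexHull ℝ s =
      (fun p : (Fin (Module.finrank ℝ E + 1) → ℝ) × (Fin (Module.finrank ℝ E + 1) → E) =>
          ∑ j, p.1 j • p.2 j) ''
        (stdSimplex ℝ _ ×ˢ univ.pi fun _ => s) := by
  refine Subset.antisymm (fun x hx => ?_) ?_
  · obtain ⟨w, hw, z, hzs, rfl⟩ := exists_stdSimplex_sum_eq_of_mem_convexHull hx hx₀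
    exact ⟨(w, z), ⟨hw, fun j _ => hzs j⟩, rfl⟩
  · rintro _ ⟨⟨w, z⟩, ⟨⟨hw₀, hw₁⟩, hz⟩, rfl⟩
    exact (convex_convexHull ℝ s).sum_mem (fun j _ => hw₀ j) hw₁
      fun j _ => subset_convexHull ℝ s (hz j (mem_univ j))

variable [TopologicalSpace E] [IsTopologicalAddGroup E] [ContinuousSMul ℝ E]

lemma IsCompact.convexHull {s : Set E} (hs : IsCompact s) : IsCompact (convexHull ℝ s) := by
  rcases s.eq_empty_or_nonempty with rfl | ⟨x₀, hx₀⟩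
  · simp
  rw [convexHull_eq_image_stdSimplex_prod_pi hx₀]
  exact ((isCompact_stdSimplex ℝ _).prod (isCompact_univ_pi fun _ => hs)).image (by fun_prop)

end CompactConvexHull

section ClosureInterior

variable {X : Type*} [TopologicalSpace X] {s : Set X}

lemma closure_interior_eq_closure_of_subset (h : s ⊆ closure (interior s)) :
    closure (interior s) = closure s :=
  (closure_mono interior_subset).antisymm (closure_minimal h isClosed_closure)

lemma frontier_interior_eq_frontier_of_subset (h : s ⊆ closure (interior s)) :
    frontier (interior s) = frontier s := by
  rw [frontier, frontier, interior_interior, closure_interior_eq_closure_of_subset h]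

lemma diff_subset_closure_interior_diff {K : Set X} (h : s ⊆ closure (interior s))
    (hK : IsClosed K) : s \ K ⊆ closure (interior (s \ K)) := by
  rw [sdiff_eq, interior_inter, hK.isOpen_compl.interior_eq, inter_comm (interior s)]
  exact fun x hx => hK.isOpen_compl.inter_closure ⟨hx.2, h hx.1⟩

end ClosureInterior

theorem stmt13_general (d J : ℕ)
    (Φ : Fin J → (EuclideanSpace ℝ (Fin d) →ᵃ[ℝ] EuclideanSpace ℝ (Fin d)))
    (F : Set (EuclideanSpace ℝ (Fin d)))
    (hFc : IsCompact F)
    (hnt : (interior (convexHull ℝ F)).Nonempty) :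
    closure (convexHull ℝ F \ ⋃ j, (Φ j) '' convexHull ℝ F) =
      closure (interior (convexHull ℝ F \ ⋃ j, (Φ j) '' convexHull ℝ F)) ∧
    frontier (convexHull ℝ F \ ⋃ j, (Φ j) '' convexHull ℝ F) =
      frontier (interior (convexHull ℝ F \ ⋃ j, (Φ j) '' convexHull ℝ F)) := by
  have hC : convexHull ℝ F ⊆ closure (interior (convexHull ℝ F)) := by
    rw [(convex_convexHull ℝ F).closure_interior_eq_closure_of_nonempty_interior hnt]
    exact subset_closure
  have hΦC : IsClosed (⋃ j, (Φ j) '' convexHull ℝ F) := isClosed_iUnion_of_finite fun j =>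
    (hFc.convexHull.image (Φ j).continuous_of_finiteDimensional).isClosed
  have h := diff_subset_closure_interior_diff hC hΦC
  exact ⟨(closure_interior_eq_closure_of_subset h).symm,
    (frontier_interior_eq_frontier_of_subset h).symm⟩

theorem stmt13 (d J : ℕ)
    (Φ : Fin J → (EuclideanSpace ℝ (Fin d) →ᵃ[ℝ] EuclideanSpace ℝ (Fin d)))
    (r : Fin J → NNReal) (hr : ∀ j, r j < 1)
    (hlip : ∀ j, LipschitzWith (r j) (Φ j))
    (F : Set (EuclideanSpace ℝ (Fin d)))
    (hFne : F.Nonempty) (hFc : IsCompact F)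
    (hFinv : F = ⋃ j, (Φ j) '' F)
    (hbij : ∀ j, Function.Bijective (Φ j))
    (hnt : (interior (convexHull ℝ F)).Nonempty) :
    closure (convexHull ℝ F \ ⋃ j, (Φ j) '' convexHull ℝ F) =
      closure (interior (convexHull ℝ F \ ⋃ j, (Φ j) '' convexHull ℝ F)) ∧
    frontier (convexHull ℝ F \ ⋃ j, (Φ j) '' convexHull ℝ F) =
      frontier (interior (convexHull ℝ F \ ⋃ j, (Φ j) '' convexHull ℝ F)) :=
  stmt13_general d J Φ F hFc hnt
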